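/- Under the distributed adversarial daemon, every execution of the maximal matching algorithm is finite, i.e., the algorithm always terminates in a stable configuration. -/

import Mathlib

structure Config (V : Type*) where
  p : V → Option V
  m : V → Bool

variable {V : Type*}

def PRmarried (G : SimpleGraph V) (p : V → Option V) (i : V) : Prop :=
  ∃ j, G.Adj i j ∧ p i = some j ∧ p j = some i

def PRwaiting (G : SimpleGraph V) (p : V → Option V) (i : V) : Prop :=
  ∃ j, G.Adj i j ∧ p i = some j ∧ p j ≠ some i ∧ ¬ PRmarried G p j

def PRcondemned (G : SimpleGraph V) (p : V → Option V) (i : V) : Prop :=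
  ∃ j, G.Adj i j ∧ p i = some j ∧ p j ≠ some i ∧ PRmarried G p j

def PRdead (G : SimpleGraph V) (p : V → Option V) (i : V) : Prop :=
  p i = none ∧ ∀ j, G.Adj i j → PRmarried G p j

def PRfree (G : SimpleGraph V) (p : V → Option V) (i : V) : Prop :=
  p i = none ∧ ∃ j, G.Adj i j ∧ ¬ PRmarried G p j

def Valid (G : SimpleGraph V) (C : Config V) : Prop :=
  ∀ i j, C.p i = some j → G.Adj i j

section Rules
variable [LinearOrder V]

def UpdateEnabled (G : SimpleGraph V) (C : Config V) (i : V) : Prop :=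
  ¬ (C.m i = true ↔ PRmarried G C.p i)

def MarriageEnabled (G : SimpleGraph V) (C : Config V) (i : V) : Prop :=
  (C.m i = true ↔ PRmarried G C.p i) ∧ C.p i = none ∧ ∃ j, G.Adj i j ∧ C.p j = some i

def SeductionEnabled (G : SimpleGraph V) (C : Config V) (i : V) : Prop :=
  (C.m i = true ↔ PRmarried G C.p i) ∧ C.p i = none ∧
    (∀ k, G.Adj i k → C.p k ≠ some i) ∧
    ∃ j, G.Adj i j ∧ C.p j = none ∧ i < j ∧ C.m j = false

def AbandonmentEnabled (G : SimpleGraph V) (C : Config V) (i : V) : Prop :=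
  (C.m i = true ↔ PRmarried G C.p i) ∧
    ∃ j, G.Adj i j ∧ C.p i = some j ∧ C.p j ≠ some i ∧ (C.m j = true ∨ j ≤ i)

def Eligible (G : SimpleGraph V) (C : Config V) (i : V) : Prop :=
  UpdateEnabled G C i ∨ MarriageEnabled G C i ∨ SeductionEnabled G C i ∨ AbandonmentEnabled G C i

def Stable (G : SimpleGraph V) (C : Config V) : Prop := ∀ i, ¬ Eligible G C i

def Unchanged (C C' : Config V) (i : V) : Prop := C'.p i = C.p i ∧ C'.m i = C.m i

def DoesUpdate (G : SimpleGraph V) (C C' : Config V) (i : V) : Prop :=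
  UpdateEnabled G C i ∧ C'.p i = C.p i ∧ (C'.m i = true ↔ PRmarried G C.p i)

def DoesMarriageTo (G : SimpleGraph V) (C C' : Config V) (i j : V) : Prop :=
  MarriageEnabled G C i ∧ G.Adj i j ∧ C.p j = some i ∧ C'.p i = some j ∧ C'.m i = C.m i

def DoesSeductionTo (G : SimpleGraph V) (C C' : Config V) (i j : V) : Prop :=
  SeductionEnabled G C i ∧ G.Adj i j ∧ C.p j = none ∧ i < j ∧ C.m j = false ∧
    (∀ k, G.Adj i k → C.p k = none → i < k → C.m k = false → k ≤ j) ∧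
    C'.p i = some j ∧ C'.m i = C.m i

def DoesAbandonmentFrom (G : SimpleGraph V) (C C' : Config V) (i j : V) : Prop :=
  AbandonmentEnabled G C i ∧ C.p i = some j ∧ C'.p i = none ∧ C'.m i = C.m i

def Moves (G : SimpleGraph V) (C C' : Config V) (i : V) : Prop :=
  DoesUpdate G C C' i ∨ (∃ j, DoesMarriageTo G C C' i j) ∨
    (∃ j, DoesSeductionTo G C C' i j) ∨ (∃ j, DoesAbandonmentFrom G C C' i j)

def Step (G : SimpleGraph V) (C C' : Config V) : Prop :=
  (∃ i, Moves G C C' i) ∧ ∀ i, Moves G C C' i ∨ Unchanged C C' i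

def MSAMoveTo (G : SimpleGraph V) (C C' : Config V) (i j : V) : Prop :=
  DoesMarriageTo G C C' i j ∨ DoesSeductionTo G C C' i j ∨ DoesAbandonmentFrom G C C' i j

def IJMove (G : SimpleGraph V) (C C' : Config V) (i j : V) : Prop :=
  MSAMoveTo G C C' i j ∨ MSAMoveTo G C C' j i

end Rules

/-!
Give each node `i` a potential in `ℕ`: `2` if it is unmarried (outweighing a mark that its
marriage makes wrong), `1` if its mark is wrong, `1` if it points to a smaller node without being
married, and, for each larger node `j`, a weight `edgePotential i j` read off the status of `j`
and whether `i` points to `j`. No step raises the potential of any node and every move lowers the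
mover's own potential, so the total potential strictly decreases along an execution.
-/

section Steps

variable {G : SimpleGraph V} {C C' : Config V} {i j : V}

lemma PRmarried.pointer_eq {p : V → Option V} (hM : PRmarried G p i) (hp : p i = some j) :
    p j = some i := by
  obtain ⟨k, -, hk, hpk⟩ := hM
  rw [hp, Option.some_inj] at hk
  exact hk ▸ hpk

lemma not_PRmarried_of_eq_none {p : V → Option V} (hp : p i = none) : ¬ PRmarried G p i := by
  rintro ⟨j, -, hj, -⟩
  simp [hp] at hj

variable [LinearOrder V]

lemma DoesAbandonmentFrom.partner (hA : DoesAbandonmentFrom G C C' i j) :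
    C.p j ≠ some i ∧ (C.m j = true ∨ j ≤ i) := by
  obtain ⟨⟨-, k, -, hk, hpk, hmk⟩, hj, -⟩ := hA
  rw [hj, Option.some_inj] at hk
  exact hk ▸ ⟨hpk, hmk⟩

lemma Step.pointer_eq_or_abandon (h : Step G C C') (hp : C.p i = some j) :
    C'.p i = some j ∨ DoesAbandonmentFrom G C C' i j := by
  rcases h.2 i with (hU | ⟨k, hM⟩ | ⟨k, hS⟩ | ⟨k, hA⟩) | hU
  · exact Or.inl (hU.2.1.trans hp)
  · simp [hM.1.2.1] at hp
  · simp [hS.1.2.1] at hp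
  · obtain rfl : k = j := Option.some_inj.mp (hA.2.1.symm.trans hp)
    exact Or.inr hA
  · exact Or.inl (hU.1.trans hp)

lemma Step.pointer_eq_of_PRmarried (h : Step G C C') (hM : PRmarried G C.p i) :
    C'.p i = C.p i := by
  obtain ⟨j, -, hp, hpj⟩ := hM
  rw [hp]
  exact (h.pointer_eq_or_abandon hp).resolve_right fun hA => hA.partner.1 hpj

lemma Step.preserves_PRmarried (h : Step G C C') (hM : PRmarried G C.p i) :
    PRmarried G C'.p i := by
  obtain ⟨j, hadj, hp, hpj⟩ := hM
  refine ⟨j, hadj, ?_, ?_⟩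
  · rw [h.pointer_eq_of_PRmarried ⟨j, hadj, hp, hpj⟩, hp]
  · rw [h.pointer_eq_of_PRmarried ⟨i, hadj.symm, hpj, hp⟩, hpj]

lemma Step.pointer_eq_of_lt (h : Step G C C') (hp : C.p i = some j) (hm : C.m j = false)
    (hij : i < j) : C'.p i = some j :=
  (h.pointer_eq_or_abandon hp).resolve_right fun hA => by
    rcases hA.partner.2 with hmj | hji
    · simp [hm] at hmj
    · exact hji.not_gt hij

lemma Step.mark_eq_or_iff (h : Step G C C') (i : V) :
    C'.m i = C.m i ∨ (C'.m i = true ↔ PRmarried G C.p i) := by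
  rcases h.2 i with (hU | ⟨j, hM⟩ | ⟨j, hS⟩ | ⟨j, hA⟩) | hU
  · exact Or.inr hU.2.2
  · exact Or.inl hM.2.2.2.2
  · exact Or.inl hS.2.2.2.2.2.2.2
  · exact Or.inl hA.2.2.2
  · exact Or.inl hU.2

lemma Step.mark_eq_false (h : Step G C C') (hM : ¬ PRmarried G C.p i) (hm : C.m i = false) :
    C'.m i = false := by
  rcases h.mark_eq_or_iff i with hm' | hm'
  · exact hm'.trans hm
  · simpa [hM] using hm'

lemma Step.new_pointer (h : Step G C C') (hp : C.p i ≠ some j) (hp' : C'.p i = some j) :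
    ¬ PRmarried G C.p j ∧
      ((PRmarried G C'.p i ∧ PRmarried G C'.p j) ∨ (i < j ∧ C.m j = false)) := by
  rcases h.2 i with (hU | ⟨k, hM⟩ | ⟨k, hS⟩ | ⟨k, hA⟩) | hU
  · exact absurd (hU.2.1 ▸ hp') hp
  · obtain ⟨⟨hcorr, hpi, -⟩, hadj, hpk, hpk', -⟩ := hM
    obtain rfl : k = j := Option.some_inj.mp (hpk'.symm.trans hp')
    have hMj : ¬ PRmarried G C.p k := fun hMj => by simpa [hpi] using hMj.pointer_eq hpk
    refine ⟨hMj, ?_⟩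
    rcases h.pointer_eq_or_abandon hpk with hpk' | hA
    · exact Or.inl ⟨⟨k, hadj, hp', hpk'⟩, ⟨i, hadj.symm, hpk', hp'⟩⟩
    · have hmi : C.m i = false := by simpa [not_PRmarried_of_eq_none hpi] using hcorr
      have hik : i ≤ k := hA.partner.2.resolve_left (by simp [hmi])
      have hne : i ≠ k := fun hik => by simp [hik ▸ hpi] at hpk
      exact Or.inr ⟨lt_of_le_of_ne hik hne, by simpa [hMj] using hA.1.1⟩
  · obtain ⟨-, -, hpk, hik, hmk, -, hpk', -⟩ := hS
    obtain rfl : k = j := Option.some_inj.mp (hpk'.symm.trans hp')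
    exact ⟨not_PRmarried_of_eq_none hpk, Or.inr ⟨hik, hmk⟩⟩
  · simp [hA.2.2.1] at hp'
  · exact absurd (hU.1 ▸ hp') hp

end Steps

section Potential

open Classical in
noncomputable def statusPotential (G : SimpleGraph V) (C : Config V) (i : V) : ℕ :=
  (if PRmarried G C.p i then 0 else 2) + (if C.m i = true ↔ PRmarried G C.p i then 0 else 1)

open Classical in
noncomputable def downPointerPotential [LinearOrder V] (G : SimpleGraph V) (C : Config V)
    (i : V) : ℕ :=
  if (∃ j < i, C.p i = some j) ∧ ¬ PRmarried G C.p i then 1 else 0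

/- While `j` is unmarried, `i < j` can seduce `j` only if `m j = false` (4 → 3) and abandon it
only if `m j = true` (5 → 4); resetting `m j` to `false` turns 5 into 3 and keeps 4. -/
open Classical in
noncomputable def edgePotential [LinearOrder V] (G : SimpleGraph V) (C : Config V)
    (i j : V) : ℕ :=
  if i < j then
    if PRmarried G C.p j then (if C.p i = some j then 1 else 0)
    else if C.m j = true then (if C.p i = some j then 5 else 4)
    else (if C.p i = some j then 3 else 4)
  else 0

variable {G : SimpleGraph V} {C C' : Config V} {i j : V}

lemma statusPotential_lt_of_PRmarried (hM : ¬ PRmarried G C.p i) (hM' : PRmarried G C'.p i) :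
    statusPotential G C' i < statusPotential G C i := by
  unfold statusPotential
  split_ifs <;> simp_all

variable [LinearOrder V]

lemma statusPotential_le (h : Step G C C') (i : V) :
    statusPotential G C' i ≤ statusPotential G C i := by
  have hM : PRmarried G C.p i → PRmarried G C'.p i := h.preserves_PRmarried
  have hm := h.mark_eq_or_iff i
  unfold statusPotential
  split_ifs <;> simp_all

lemma statusPotential_lt_of_update (h : Step G C C') (hu : DoesUpdate G C C' i) :
    statusPotential G C' i < statusPotential G C i := by
  have hM : PRmarried G C.p i → PRmarried G C'.p i := h.preserves_PRmarried
  obtain ⟨hwrong, -, hm'⟩ := hu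
  unfold UpdateEnabled at hwrong
  unfold statusPotential
  split_ifs <;> simp_all

lemma downPointerPotential_le (h : Step G C C') (i : V) :
    downPointerPotential G C' i ≤ downPointerPotential G C i := by
  suffices (∃ j < i, C'.p i = some j) ∧ ¬ PRmarried G C'.p i →
      (∃ j < i, C.p i = some j) ∧ ¬ PRmarried G C.p i by
    unfold downPointerPotential
    split_ifs <;> simp_all
  rintro ⟨⟨j, hji, hp'⟩, hM'⟩
  refine ⟨⟨j, hji, ?_⟩, fun hM => hM' (h.preserves_PRmarried hM)⟩
  by_contra hp
  rcases (h.new_pointer hp hp').2 with ⟨hMi, -⟩ | ⟨hij, -⟩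
  · exact hM' hMi
  · exact hji.not_gt hij

lemma downPointerPotential_lt_of_abandon (hA : DoesAbandonmentFrom G C C' i j) (hji : j < i) :
    downPointerPotential G C' i < downPointerPotential G C i := by
  have hp : C.p i = some j := hA.2.1
  have hM : ¬ PRmarried G C.p i := fun hM => hA.partner.1 (hM.pointer_eq hp)
  unfold downPointerPotential
  rw [if_neg (by simp [hA.2.2.1]), if_pos ⟨⟨j, hji, hp⟩, hM⟩]
  exact Nat.zero_lt_one

lemma edgePotential_le (h : Step G C C') (i j : V) :
    edgePotential G C' i j ≤ edgePotential G C i j := by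
  have hM : PRmarried G C.p j → PRmarried G C'.p j := h.preserves_PRmarried
  have hmark : ¬ PRmarried G C.p j → C.m j = false → C'.m j = false := h.mark_eq_false
  have hnew (hp : C.p i ≠ some j) (hp' : C'.p i = some j) :
      ¬ PRmarried G C.p j ∧ (PRmarried G C'.p j ∨ C.m j = false) := by
    obtain ⟨hMj, ⟨-, hMj'⟩ | ⟨-, hmj⟩⟩ := h.new_pointer hp hp'
    exacts [⟨hMj, Or.inl hMj'⟩, ⟨hMj, Or.inr hmj⟩]
  unfold edgePotential
  by_cases hij : i < j
  · have hkeep : C.p i = some j → C.m j = false → C'.p i = some j :=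
      fun hp hm => h.pointer_eq_of_lt hp hm hij
    split_ifs <;> simp_all
  · simp [hij]

lemma edgePotential_lt_of_new_pointer (h : Step G C C') (hij : i < j) (hp : C.p i ≠ some j)
    (hp' : C'.p i = some j) : edgePotential G C' i j < edgePotential G C i j := by
  have hmark : ¬ PRmarried G C.p j → C.m j = false → C'.m j = false := h.mark_eq_false
  obtain ⟨hMj, hcases⟩ := h.new_pointer hp hp'
  unfold edgePotential
  split_ifs <;> simp_all

lemma edgePotential_lt_of_abandon (h : Step G C C') (hA : DoesAbandonmentFrom G C C' i j)
    (hij : i < j) : edgePotential G C' i j < edgePotential G C i j := by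
  have hM : PRmarried G C.p j → PRmarried G C'.p j := h.preserves_PRmarried
  have hmj : C.m j = true := hA.partner.2.resolve_right hij.not_ge
  obtain ⟨-, hp, hp', -⟩ := hA
  unfold edgePotential
  split_ifs <;> simp_all

end Potential

section Termination

variable [Fintype V] [LinearOrder V] {G : SimpleGraph V} {C C' : Config V} {i : V}

noncomputable def nodePotential (G : SimpleGraph V) (C : Config V) (i : V) : ℕ :=
  statusPotential G C i + downPointerPotential G C i + ∑ j, edgePotential G C i j

noncomputable def potential (G : SimpleGraph V) (C : Config V) : ℕ :=
  ∑ i, nodePotential G C i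

lemma nodePotential_le (h : Step G C C') (i : V) : nodePotential G C' i ≤ nodePotential G C i :=
  add_le_add (add_le_add (statusPotential_le h i) (downPointerPotential_le h i))
    (Finset.sum_le_sum fun j _ => edgePotential_le h i j)

lemma nodePotential_lt (h : Step G C C')
    (hlt : statusPotential G C' i < statusPotential G C i ∨
      downPointerPotential G C' i < downPointerPotential G C i ∨
      ∃ j, edgePotential G C' i j < edgePotential G C i j) :
    nodePotential G C' i < nodePotential G C i := by
  have hA := statusPotential_le h i
  have hD := downPointerPotential_le h i
  have hE := Finset.sum_le_sum fun j (_ : j ∈ Finset.univ) => edgePotential_le h i j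
  unfold nodePotential
  rcases hlt with hA' | hD' | ⟨j, hj⟩
  · omega
  · omega
  · have := Finset.sum_lt_sum (fun j _ => edgePotential_le h i j) ⟨j, Finset.mem_univ j, hj⟩
    omega

lemma nodePotential_lt_of_new_pointer (h : Step G C C') {j : V} (hp : C.p i ≠ some j)
    (hp' : C'.p i = some j) : nodePotential G C' i < nodePotential G C i := by
  apply nodePotential_lt h
  rcases lt_or_ge i j with hij | hji
  · exact Or.inr (Or.inr ⟨j, edgePotential_lt_of_new_pointer h hij hp hp'⟩)
  · obtain ⟨-, ⟨hMi', -⟩ | ⟨hij, -⟩⟩ := h.new_pointer hp hp'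
    · have hMi : ¬ PRmarried G C.p i := fun hMi =>
        hp ((h.pointer_eq_of_PRmarried hMi).symm.trans hp')
      exact Or.inl (statusPotential_lt_of_PRmarried hMi hMi')
    · exact absurd hij hji.not_gt

lemma nodePotential_lt_of_abandon (h : Step G C C') {j : V}
    (hA : DoesAbandonmentFrom G C C' i j) : nodePotential G C' i < nodePotential G C i := by
  apply nodePotential_lt h
  have hne : i ≠ j := by
    rintro rfl
    exact hA.partner.1 hA.2.1
  rcases hne.lt_or_gt with hij | hji
  · exact Or.inr (Or.inr ⟨j, edgePotential_lt_of_abandon h hA hij⟩)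
  · exact Or.inr (Or.inl (downPointerPotential_lt_of_abandon hA hji))

lemma nodePotential_lt_of_moves (h : Step G C C') (hi : Moves G C C' i) :
    nodePotential G C' i < nodePotential G C i := by
  rcases hi with hu | ⟨j, hM⟩ | ⟨j, hS⟩ | ⟨j, hA⟩
  · exact nodePotential_lt h (Or.inl (statusPotential_lt_of_update h hu))
  · exact nodePotential_lt_of_new_pointer h (by simp [hM.1.2.1]) hM.2.2.2.1
  · exact nodePotential_lt_of_new_pointer h (by simp [hS.1.2.1]) hS.2.2.2.2.2.2.1
  · exact nodePotential_lt_of_abandon h hA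

lemma Step.potential_lt (h : Step G C C') : potential G C' < potential G C := by
  obtain ⟨i, hi⟩ := h.1
  exact Finset.sum_lt_sum (fun i _ => nodePotential_le h i)
    ⟨i, Finset.mem_univ i, nodePotential_lt_of_moves h hi⟩

end Termination

theorem no_infinite_execution [Fintype V] [LinearOrder V] (G : SimpleGraph V) :
    ¬ ∃ C : ℕ → Config V, Valid G (C 0) ∧ ∀ t, Step G (C t) (C (t+1)) := by
  rintro ⟨C, -, hstep⟩
  exact not_strictAnti_of_wellFoundedLT (fun t => potential G (C t))
    (strictAnti_nat_of_succ_lt fun t => (hstep t).potential_lt)
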